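/- Let N, m be positive integers with g := √(2N)·m ≥ 2, let b ∈ ℂ∖{0}, and set e^g_b := Ω ⊗ (e^{gJ} + b e^{−gJ}) ∈ V_{L_{2N}}. Then (Ω ⊗ e^{±gJ})_{(g²−2)}(Ω ⊗ e^{∓gJ}) = (±g J_{-1}Ω) ⊗ 1, and (e^g_b)_{(g²−5)} e^g_b = b v_g ⊗ 1, where v_g := (g⁴/12)(J_{-1})⁴Ω + (2g²/3)J_{-3}J_{-1}Ω + (g²/4)(J_{-2})²Ω. -/

import Mathlib

/-!
Common framework: unitary vertex operator algebras, unitary subalgebras,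
rank-one even lattice vertex operator algebras `V_{L_{2N}}`, and the
infinite dihedral group `D_∞ = 𝕋 ⋊ ℤ₂` acting on them.
-/

noncomputable section

open scoped BigOperators

/-- The data and basic axioms of a unitary vertex operator algebra `(V, Ω, Y, T, ν, (·|·), θ)`.
The modes of the vertex operator `Y(a,z) = ∑ₙ a₍ₙ₎ z^{-n-1}` are recorded as
`mode a n : V →ₗ[ℂ] V`, `b ↦ a₍ₙ₎ b`; the translation operator is `T = L₋₁ = ν₍₀₎`,
`ν` is the conformal vector of central charge `cc`, `inn` is the normalized invariant
scalar product and `θ` the associated PCT operator. -/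
structure UnitaryVOA where
  V : Type
  [addCommGroup : AddCommGroup V]
  [module : Module ℂ V]
  /-- the vacuum vector Ω -/
  vac : V
  /-- the modes `mode a n b = a₍ₙ₎b` -/
  mode : V → ℤ → V →ₗ[ℂ] V
  mode_add : ∀ (a b : V) (n : ℤ), mode (a + b) n = mode a n + mode b n
  mode_smul : ∀ (c : ℂ) (a : V) (n : ℤ), mode (c • a) n = c • mode a n
  /-- the conformal vector -/
  ν : V
  /-- the central charge -/
  cc : ℂ
  /-- vacuum axioms: `Y(Ω,z) = 1`, `a₍ₙ₎Ω = 0` for `n ≥ 0`, `a₍₋₁₎Ω = a` -/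
  vac_mode : ∀ (n : ℤ) (b : V), mode vac n b = if n = -1 then b else 0
  mode_vac_nonneg : ∀ (a : V) (n : ℤ), 0 ≤ n → mode a n vac = 0
  mode_vac_create : ∀ a : V, mode a (-1) vac = a
  /-- translation covariance: `(L₋₁a)₍ₙ₎ = -n a₍ₙ₋₁₎` -/
  translation : ∀ (a : V) (n : ℤ), mode (mode ν 0 a) n = (-n : ℂ) • mode a (n - 1)
  /-- locality: `(z-w)^K [Y(a,z), Y(b,w)] = 0` in components -/
  locality : ∀ a b : V, ∃ K : ℕ, ∀ (p q : ℤ) (c : V),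
    ∑ i ∈ Finset.range (K + 1),
      (((-1 : ℂ)) ^ i * (K.choose i : ℂ)) •
        (mode a (p + K - i) (mode b (q + i) c) - mode b (q + i) (mode a (p + K - i) c)) = 0
  /-- the Virasoro commutation relations for the modes `Lₙ = ν₍ₙ₊₁₎` of the conformal vector -/
  virasoro : ∀ (m n : ℤ) (v : V),
    mode ν (m + 1) (mode ν (n + 1) v) - mode ν (n + 1) (mode ν (m + 1) v)
      = ((m - n : ℤ) : ℂ) • mode ν (m + n + 1) v
        + (if m + n = 0 then (cc * ((m : ℂ) ^ 3 - (m : ℂ)) / 12) • v else 0)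
  /-- the invariant scalar product (antilinear in the first variable) -/
  inn : V → V → ℂ
  inn_add_left : ∀ a b c, inn (a + b) c = inn a c + inn b c
  inn_smul_left : ∀ (r : ℂ) (a b : V), inn (r • a) b = (starRingEnd ℂ) r * inn a b
  inn_add_right : ∀ a b c, inn a (b + c) = inn a b + inn a c
  inn_smul_right : ∀ (r : ℂ) (a b : V), inn a (r • b) = r * inn a b
  inn_conj : ∀ a b, inn a b = (starRingEnd ℂ) (inn b a)
  inn_pos : ∀ a : V, a ≠ 0 → 0 < (inn a a).re
  inn_normalized : inn vac vac = 1
  /-- invariance of the scalar product: `(L₋ₙa|b) = (a|Lₙb)` -/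
  inn_adjoint : ∀ (n : ℤ) (a b : V), inn a (mode ν (n + 1) b) = inn (mode ν (-n + 1) a) b
  /-- the PCT operator -/
  θ : V → V
  θ_add : ∀ a b, θ (a + b) = θ a + θ b
  θ_smul : ∀ (r : ℂ) (a : V), θ (r • a) = (starRingEnd ℂ) r • θ a
  θ_invol : ∀ a, θ (θ a) = a
  θ_vac : θ vac = vac
  θ_ν : θ ν = ν
  θ_mode : ∀ (a : V) (n : ℤ) (b : V), θ (mode a n b) = mode (θ a) n (θ b)

attribute [instance] UnitaryVOA.addCommGroup UnitaryVOA.module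

namespace UnitaryVOA

variable (A : UnitaryVOA)

/-- The Virasoro operators `L n = ν₍ₙ₊₁₎`. -/
def L (n : ℤ) : A.V →ₗ[ℂ] A.V := A.mode A.ν (n + 1)

/-- A vertex subalgebra: a subspace containing the vacuum and closed under all modes. -/
def IsVertexSubalgebra (W : Submodule ℂ A.V) : Prop :=
  A.vac ∈ W ∧ ∀ a ∈ W, ∀ b ∈ W, ∀ n : ℤ, A.mode a n b ∈ W

/-- A unitary subalgebra: a vertex subalgebra invariant under `θ` and `L₁`. -/
def IsUnitarySubalgebra (W : Submodule ℂ A.V) : Prop :=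
  A.IsVertexSubalgebra W ∧ (∀ a ∈ W, A.θ a ∈ W) ∧ ∀ a ∈ W, A.L 1 a ∈ W

/-- The trivial subalgebra `ℂΩ`. -/
def trivialSubalgebra : Submodule ℂ A.V := Submodule.span ℂ {A.vac}

/-- The smallest vertex subalgebra containing a set `S`. -/
def generatedVertexSubalgebra (S : Set A.V) : Submodule ℂ A.V :=
  sInf {W : Submodule ℂ A.V | A.IsVertexSubalgebra W ∧ S ⊆ W}

/-- The smallest unitary subalgebra containing a set `S`. -/
def generatedUnitarySubalgebra (S : Set A.V) : Submodule ℂ A.V :=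
  sInf {W : Submodule ℂ A.V | A.IsUnitarySubalgebra W ∧ S ⊆ W}

/-- The Virasoro subalgebra `L(c,0) ⊆ V` generated by the conformal vector. -/
def virasoroSubalgebra : Submodule ℂ A.V := A.generatedUnitarySubalgebra {A.ν}

/-- An ideal of a vertex algebra. -/
def IsIdeal (I : Submodule ℂ A.V) : Prop :=
  (∀ a ∈ I, A.L (-1) a ∈ I) ∧ ∀ a : A.V, ∀ b ∈ I, ∀ n : ℤ, A.mode a n b ∈ I

/-- Simplicity: the only ideals are `0` and `V`. -/
def IsSimple : Prop := ∀ I : Submodule ℂ A.V, A.IsIdeal I → I = ⊥ ∨ I = ⊤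

/-- Fixed points of a family of linear automorphisms. -/
def fixedSubmodule (S : Set (A.V ≃ₗ[ℂ] A.V)) : Submodule ℂ A.V where
  carrier := {v | ∀ g ∈ S, g v = v}
  add_mem' := by
    intro a b ha hb g hg
    rw [map_add, ha g hg, hb g hg]
  zero_mem' := by
    intro g hg
    exact map_zero _
  smul_mem' := by
    intro c v hv g hg
    rw [map_smul, hv g hg]

/-- The compact group `Aut_{(·|·)}(V)` of unitary automorphisms of a unitary VOA, as a
subgroup of the group of linear automorphisms of `V`. -/
def unitaryAut : Subgroup (A.V ≃ₗ[ℂ] A.V) where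
  carrier := {g | g A.vac = A.vac ∧ g A.ν = A.ν ∧
    (∀ (a : A.V) (n : ℤ) (b : A.V), g (A.mode a n b) = A.mode (g a) n (g b)) ∧
    ∀ a b : A.V, A.inn (g a) (g b) = A.inn a b}
  one_mem' := by
    refine ⟨rfl, rfl, fun a n b => rfl, fun a b => rfl⟩
  mul_mem' := by
    rintro g h ⟨hg1, hg2, hg3, hg4⟩ ⟨hh1, hh2, hh3, hh4⟩
    refine ⟨?_, ?_, ?_, ?_⟩
    · show g (h A.vac) = A.vac
      rw [hh1, hg1]
    · show g (h A.ν) = A.ν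
      rw [hh2, hg2]
    · intro a n b
      show g (h (A.mode a n b)) = A.mode (g (h a)) n (g (h b))
      rw [hh3, hg3]
    · intro a b
      show A.inn (g (h a)) (g (h b)) = A.inn a b
      rw [hg4, hh4]
  inv_mem' := by
    rintro g ⟨hg1, hg2, hg3, hg4⟩
    refine ⟨?_, ?_, ?_, ?_⟩
    · show g.symm A.vac = A.vac
      conv_lhs => rw [← hg1]
      exact g.symm_apply_apply _
    · show g.symm A.ν = A.ν
      conv_lhs => rw [← hg2]
      exact g.symm_apply_apply _
    · intro a n b
      show g.symm (A.mode a n b) = A.mode (g.symm a) n (g.symm b)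
      have h := hg3 (g.symm a) n (g.symm b)
      rw [g.apply_symm_apply, g.apply_symm_apply] at h
      rw [← h, g.symm_apply_apply]
    · intro a b
      show A.inn (g.symm a) (g.symm b) = A.inn a b
      conv_rhs => rw [← g.apply_symm_apply a, ← g.apply_symm_apply b]
      exact (hg4 _ _).symm

end UnitaryVOA

/-- Iterated application of operators: `applyOps J [n₁,…,n_s] v = J n₁ (⋯ (J n_s v))`. -/
def applyOps {V : Type} [AddCommGroup V] [Module ℂ V] (J : ℤ → V →ₗ[ℂ] V) :
    List ℤ → V → V
  | [], v => v
  | n :: l, v => J n (applyOps J l v)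

/-- The coefficient operators `S_p` of the exponential series
`exp (∑_{j>0} f j z^j / j) = ∑_{p≥0} S_p z^p`, defined by the recursion
`(p+1) S_{p+1} = ∑_{k=0}^{p} f (k+1) ∘ S_{p-k}`. -/
def schurOp {V : Type} [AddCommGroup V] [Module ℂ V] (f : ℕ → V →ₗ[ℂ] V) :
    ℕ → V →ₗ[ℂ] V
  | 0 => LinearMap.id
  | p + 1 => ((p : ℂ) + 1)⁻¹ •
      ∑ k ∈ Finset.range (p + 1), (f (k + 1)) ∘ₗ (schurOp f (p - k))
  termination_by p => p
  decreasing_by omega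

/-- The complex number `e^{it}` attached to an angle `t ∈ 𝕋 = ℝ/2πℤ`. -/
def angleExp (t : Real.Angle) : ℂ := Complex.exp (t.toReal * Complex.I)

/-- The rank-one even lattice vertex operator algebra `V_{L_{2N}} = M(1) ⊗ ℂ[L_{2N}]`
associated to the lattice `L_{2N} = ℤ√(2N)J`, `(J|J) = 1`, together with its standard
generators and symmetries.  Here `J n` are the Heisenberg operators (the modes of the
current), `E m = Ω ⊗ e^{m√(2N)J}` are the lattice vectors, `φa` is the lift of the
involution `α ↦ -α` of the lattice, and `g t = exp(i(t/√(2N))J₀)`, `t ∈ 𝕋`, are the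
torus automorphisms. -/
structure RankOneLatticeVOA (N : ℕ) extends UnitaryVOA where
  /-- the Heisenberg operators `Jₙ` -/
  J : ℤ → V →ₗ[ℂ] V
  /-- the lattice vectors `E m = Ω ⊗ e^{m√(2N)J}` -/
  E : ℤ → V
  /-- Heisenberg commutation relations `[Jₘ, Jₙ] = m δ_{m,-n}` -/
  heisenberg : ∀ (m n : ℤ) (v : V),
    J m (J n v) - J n (J m v) = if m + n = 0 then (m : ℂ) • v else 0
  J_vac : ∀ n : ℤ, 0 ≤ n → J n vac = 0
  J_pos_E : ∀ n : ℤ, 1 ≤ n → ∀ m : ℤ, J n (E m) = 0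
  /-- `J₀ (v ⊗ e^α) = (J|α) (v ⊗ e^α)` with `α = m√(2N)J` -/
  J_zero_E : ∀ m : ℤ, J 0 (E m) = ((m : ℂ) * (Real.sqrt (2 * N) : ℂ)) • E m
  E_zero : E 0 = vac
  /-- the conformal vector `ν = ½ J₋₁J₋₁Ω` of central charge 1 -/
  ν_def : ν = (2 : ℂ)⁻¹ • J (-1) (J (-1) vac)
  cc_one : cc = 1
  /-- the monomials `J_{n₁}⋯J_{n_s}Ω ⊗ e^α`, `n₁ ≤ ⋯ ≤ n_s < 0`, form a basis -/
  basis_indep : LinearIndependent ℂ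
    (fun p : {l : List ℤ // l.Pairwise (· ≤ ·) ∧ ∀ n ∈ l, n < 0} × ℤ =>
      applyOps J p.1.1 (E p.2))
  basis_span : Submodule.span ℂ
    (Set.range fun p : {l : List ℤ // l.Pairwise (· ≤ ·) ∧ ∀ n ∈ l, n < 0} × ℤ =>
      applyOps J p.1.1 (E p.2)) = ⊤
  /-- the PCT operator acts by `J_{n₁}⋯J_{n_s}Ω ⊗ e^α ↦ (-1)^s J_{n₁}⋯J_{n_s}Ω ⊗ e^{-α}` -/
  θ_eq : ∀ (l : List ℤ) (m : ℤ),
    θ (applyOps J l (E m)) = ((-1 : ℂ)) ^ l.length • applyOps J l (E (-m))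
  /-- the involutive automorphism `φ` -/
  φa : V ≃ₗ[ℂ] V
  φa_apply : ∀ (l : List ℤ) (m : ℤ),
    φa (applyOps J l (E m)) = ((-1 : ℂ)) ^ l.length • applyOps J l (E (-m))
  /-- the torus automorphisms `g t = exp(i(t/√(2N))J₀)` -/
  g : Real.Angle → (V ≃ₗ[ℂ] V)
  g_zero : g 0 = 1
  g_add : ∀ s t : Real.Angle, g (s + t) = g s * g t
  g_apply : ∀ (t : Real.Angle) (l : List ℤ) (m : ℤ),
    g t (applyOps J l (E m)) = angleExp (m • t) • applyOps J l (E m)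
  /-- `LₘΩ = 0` for `m ≥ -1` -/
  L_vac_low : ∀ m : ℤ, -1 ≤ m → mode ν (m + 1) vac = 0
  /-- `[Lₘ, Jₙ] = -n J_{m+n}` -/
  LJ_comm : ∀ (m n : ℤ) (v : V),
    mode ν (m + 1) (J n v) - J n (mode ν (m + 1) v) = (-n : ℂ) • J (m + n) v
  /-- `Lₘ = ½ ∑_j J_j J_{m-j}` for `m ≠ 0` (evaluated on any vector killed by `J_j`, `j ≥ K`) -/
  L_sum : ∀ m : ℤ, m ≠ 0 → ∀ (v : V) (K : ℕ), (∀ j : ℤ, (K : ℤ) ≤ j → J j v = 0) →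
    mode ν (m + 1) v = (2 : ℂ)⁻¹ • ∑ j ∈ Finset.Icc (m - K) (K : ℤ), J j (J (m - j) v)
  /-- `L₀ = ½ J₀² + ∑_{j>0} J₋ⱼJⱼ` -/
  L_zero_sum : ∀ (v : V) (K : ℕ), (∀ j : ℤ, (K : ℤ) ≤ j → J j v = 0) →
    mode ν 1 v = (2 : ℂ)⁻¹ • J 0 (J 0 v) + ∑ j ∈ Finset.Icc (1 : ℤ) (K : ℤ), J (-j) (J j v)
  /-- each `Ω ⊗ e^α` is primary -/
  L_pos_E : ∀ n : ℤ, 1 ≤ n → ∀ m : ℤ, mode ν (n + 1) (E m) = 0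
  /-- modes of the vertex operators of lattice vectors:
  `Y(Ω⊗e^α, z)(Ω⊗e^β) = z^{(α|β)} E₊(α,z) (Ω⊗e^{α+β})` with `E₊` an exponential series -/
  mode_E_E : ∀ (m m' n : ℤ),
    mode (E m) n (E m') =
      if 0 ≤ -n - 1 - 2 * (N : ℤ) * m * m' then
        schurOp (fun j => ((m : ℂ) * (Real.sqrt (2 * N) : ℂ)) • J (-(j : ℤ)))
          (Int.toNat (-n - 1 - 2 * (N : ℤ) * m * m')) (E (m + m'))
      else 0

namespace RankOneLatticeVOA

variable {N : ℕ} (A : RankOneLatticeVOA N)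

/-- The Heisenberg (current) subalgebra `M(1) ⊗ ℂ1 ⊆ V_{L_{2N}}`. -/
def heisSub : Submodule ℂ A.V :=
  Submodule.span ℂ {v : A.V | ∃ l : List ℤ, v = applyOps A.J l A.vac}

/-- The unitary subalgebra `⨁_{α ∈ L_{2Nk²}} M(1) ⊗ ℂe^α ⊆ V_{L_{2N}}`, i.e. the canonical
copy of `V_{L_{2Nk²}}` inside `V_{L_{2N}}` coming from the sublattice `L_{2Nk²} ⊆ L_{2N}`. -/
def latticeSub (k : ℕ) : Submodule ℂ A.V :=
  Submodule.span ℂ {v : A.V | ∃ (l : List ℤ) (m : ℤ), v = applyOps A.J l (A.E (k * m))}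

/-- The `φ`-fixed part `W⁺` of a subspace `W`. -/
def plusPart (W : Submodule ℂ A.V) : Submodule ℂ A.V :=
  W ⊓ A.toUnitaryVOA.fixedSubmodule {A.φa}

end RankOneLatticeVOA

/-- The infinite dihedral group `D_∞ = 𝕋 ⋊ ℤ₂`. -/
@[ext] structure DInf where
  rot : Real.Angle
  flip : Bool

namespace DInf

instance : TopologicalSpace DInf :=
  TopologicalSpace.induced (fun x => (x.rot, x.flip)) inferInstance

instance : Mul DInf :=
  ⟨fun x y => ⟨x.rot + (if x.flip then -y.rot else y.rot), xor x.flip y.flip⟩⟩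

instance : One DInf := ⟨⟨0, false⟩⟩

instance : Inv DInf := ⟨fun x => ⟨if x.flip then x.rot else -x.rot, x.flip⟩⟩

lemma mul_def (x y : DInf) :
    x * y = ⟨x.rot + (if x.flip then -y.rot else y.rot), xor x.flip y.flip⟩ := rfl

lemma one_def : (1 : DInf) = ⟨0, false⟩ := rfl

lemma inv_def (x : DInf) : x⁻¹ = ⟨if x.flip then x.rot else -x.rot, x.flip⟩ := rfl

instance : Group DInf where
  mul_assoc := by
    rintro ⟨a, af⟩ ⟨b, bf⟩ ⟨c, cf⟩
    cases af <;> cases bf <;> cases cf <;>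
      simp [mul_def, add_assoc, neg_add] <;> abel
  one_mul := by
    rintro ⟨a, af⟩
    simp [mul_def, one_def]
  mul_one := by
    rintro ⟨a, af⟩
    cases af <;> simp [mul_def, one_def]
  inv_mul_cancel := by
    rintro ⟨a, af⟩
    cases af <;> simp [mul_def, inv_def, one_def]

end DInf

namespace RankOneLatticeVOA

variable {N : ℕ} (A : RankOneLatticeVOA N)


lemma phi_mul_phi : A.φa * A.φa = 1 := by
  apply LinearEquiv.toLinearMap_injective
  apply LinearMap.ext_on_range A.basis_span
  intro p
  show A.φa (A.φa (applyOps A.J p.1.1 (A.E p.2))) = applyOps A.J p.1.1 (A.E p.2)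
  rw [A.φa_apply, map_smul, A.φa_apply, smul_smul, ← mul_pow, neg_neg]
  simp

lemma phi_mul_g (t : Real.Angle) : A.φa * A.g t = A.g (-t) * A.φa := by
  apply LinearEquiv.toLinearMap_injective
  apply LinearMap.ext_on_range A.basis_span
  intro p
  show A.φa (A.g t (applyOps A.J p.1.1 (A.E p.2)))
      = A.g (-t) (A.φa (applyOps A.J p.1.1 (A.E p.2)))
  rw [A.g_apply, map_smul, A.φa_apply, map_smul, A.g_apply, smul_comm]
  congr 2
  simp

/-- The canonical homomorphism of `D_∞ = 𝕋 ⋊ ℤ₂` to linear automorphisms of `V_{L_{2N}}`,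
sending `(t, 0)` to `g t` and `(0, 1)` to `φ`. -/
def dHom : DInf →* (A.V ≃ₗ[ℂ] A.V) where
  toFun x := A.g x.rot * (cond x.flip A.φa 1)
  map_one' := by
    show A.g (0 : Real.Angle) * 1 = 1
    rw [A.g_zero, mul_one]
  map_mul' := by
    rintro ⟨s, sf⟩ ⟨t, tf⟩
    cases sf <;> cases tf
    · show A.g (s + t) * 1 = (A.g s * 1) * (A.g t * 1)
      rw [mul_one, mul_one, mul_one, A.g_add]
    · show A.g (s + t) * A.φa = (A.g s * 1) * (A.g t * A.φa)
      rw [mul_one, A.g_add, mul_assoc]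
    · show A.g (s + -t) * A.φa = (A.g s * A.φa) * (A.g t * 1)
      rw [mul_one, A.g_add, mul_assoc, mul_assoc, A.phi_mul_g]
    · show A.g (s + -t) * 1 = (A.g s * A.φa) * (A.g t * A.φa)
      rw [mul_one, A.g_add, mul_assoc, ← mul_assoc A.φa, A.phi_mul_g,
        mul_assoc, A.phi_mul_phi, mul_one]
/-- The cyclic subgroup `ℤ_k ⊆ 𝕋 ⊆ D_∞`, generated by the rotation by `2π/k`. -/
def zkDInf (k : ℕ) : Subgroup DInf :=
  Subgroup.closure {⟨((2 * Real.pi / k : ℝ) : Real.Angle), false⟩}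

/-- The dihedral subgroup `D_k = ℤ_k ⋊ ℤ₂ ⊆ D_∞`. -/
def dkDInf (k : ℕ) : Subgroup DInf :=
  Subgroup.closure {⟨((2 * Real.pi / k : ℝ) : Real.Angle), false⟩, ⟨0, true⟩}

/-- The vector `ω_t = ν/2 + (e^{it} Ω⊗e^{2J} + e^{-it} Ω⊗e^{-2J})/4 ∈ V_{L_4}`. -/
def omegaT (A : RankOneLatticeVOA 2) (t : Real.Angle) : A.V :=
  (2 : ℂ)⁻¹ • A.ν + (4 : ℂ)⁻¹ • (angleExp t • A.E 1 + angleExp (-t) • A.E (-1))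

/-- The vector `v_g ⊗ 1 = ((g⁴/12) J₋₁⁴ + (2g²/3) J₋₃J₋₁ + (g²/4) J₋₂²)Ω ⊗ 1`. -/
def vGVec {N : ℕ} (A : RankOneLatticeVOA N) (g : ℂ) : A.V :=
  (g ^ 4 / 12) • applyOps A.J [-1, -1, -1, -1] A.vac
    + (2 * g ^ 2 / 3) • applyOps A.J [-3, -1] A.vac
    + (g ^ 2 / 4) • applyOps A.J [-2, -2] A.vac

end RankOneLatticeVOA

/-!
`Y(Ω⊗e^α, z)(Ω⊗e^β) = z^{(α|β)} E₊(α, z)(Ω⊗e^{α+β})`, so `(Ω⊗e^α)_{(n)}(Ω⊗e^β)`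
is the `z^k`-coefficient `S_k` of `E₊(α, z) = exp (∑_{j>0} α_{-j} z^j / j)` applied to
`Ω⊗e^{α+β}`, with `k = -n-1-(α|β)`, and vanishes when `k < 0`.  For `α = -β = ±gJ` the
modes in question have `k = 1` and `k = 4`, and `S_1 = α_{-1}`.  In `(e^g_b)_{(g²-5)} e^g_b`
the same-charge terms have `k = 4 - 2g² < 0` because `g ≥ 2`; in the two opposite-charge
terms the odd powers of `g` in `S_4` cancel, which leaves `b v_g`.
-/

section SchurOp

variable {V : Type} [AddCommGroup V] [Module ℂ V] (f : ℕ → Module.End ℂ V)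

theorem schurOp_zero : schurOp f 0 = 1 := by
  rw [schurOp]; rfl

theorem schurOp_succ (p : ℕ) :
    schurOp f (p + 1) =
      ((p : ℂ) + 1)⁻¹ • ∑ k ∈ Finset.range (p + 1), f (k + 1) * schurOp f (p - k) := by
  rw [schurOp]; rfl

theorem schurOp_one : schurOp f 1 = f 1 := by
  simp [schurOp_succ, schurOp_zero]

theorem schurOp_two : schurOp f 2 = (2 : ℂ)⁻¹ • (f 1 * f 1 + f 2) := by
  rw [schurOp_succ]
  simp only [Finset.sum_range_succ, Finset.sum_range_zero, Nat.reduceAdd, Nat.reduceSub,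
    schurOp_one, schurOp_zero]
  module

theorem schurOp_three :
    schurOp f 3 =
      (6 : ℂ)⁻¹ • (f 1 * f 1 * f 1 + f 1 * f 2) + (3 : ℂ)⁻¹ • (f 2 * f 1 + f 3) := by
  rw [schurOp_succ]
  simp only [Finset.sum_range_succ, Finset.sum_range_zero, Nat.reduceAdd, Nat.reduceSub,
    schurOp_two, schurOp_one, schurOp_zero, mul_add, mul_smul_comm, mul_assoc]
  module

theorem schurOp_four :
    schurOp f 4 = (24 : ℂ)⁻¹ • (f 1 * f 1 * f 1 * f 1 + f 1 * f 1 * f 2)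
      + (12 : ℂ)⁻¹ • (f 1 * f 2 * f 1 + f 1 * f 3)
      + (8 : ℂ)⁻¹ • (f 2 * f 1 * f 1 + f 2 * f 2)
      + (4 : ℂ)⁻¹ • (f 3 * f 1 + f 4) := by
  rw [schurOp_succ]
  simp only [Finset.sum_range_succ, Finset.sum_range_zero, Nat.reduceAdd, Nat.reduceSub,
    schurOp_three, schurOp_two, schurOp_one, schurOp_zero, mul_add, mul_smul_comm, mul_assoc]
  module

end SchurOp

namespace RankOneLatticeVOA

variable {N : ℕ} (A : RankOneLatticeVOA N)

theorem J_comm_of_add_ne_zero {a b : ℤ} (h : a + b ≠ 0) (v : A.V) :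
    A.J a (A.J b v) = A.J b (A.J a v) := by
  simpa [h, sub_eq_zero] using A.heisenberg a b v

theorem mode_E_E_of_eq {m m' n : ℤ} {k : ℕ} (h : -n - 1 - 2 * N * m * m' = k) :
    A.mode (A.E m) n (A.E m') =
      schurOp (fun j => ((m : ℂ) * (Real.sqrt (2 * N) : ℂ)) • A.J (-(j : ℤ))) k
        (A.E (m + m')) := by
  rw [A.mode_E_E, h, if_pos (Int.natCast_nonneg k), Int.toNat_natCast]

theorem mode_E_E_eq_zero {m m' n : ℤ} (h : -n - 1 < 2 * N * m * m') :
    A.mode (A.E m) n (A.E m') = 0 := by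
  rw [A.mode_E_E, if_neg (by linarith)]

theorem mode_E_E_neg {m n : ℤ} {k : ℕ} (h : n + 1 + k = 2 * N * m ^ 2) :
    A.mode (A.E m) n (A.E (-m)) =
      schurOp (fun j => ((m : ℂ) * (Real.sqrt (2 * N) : ℂ)) • A.J (-(j : ℤ))) k A.vac := by
  rw [A.mode_E_E_of_eq (k := k) (by linear_combination -h), add_neg_cancel, A.E_zero]

theorem schurOp_one_vac (d : ℂ) :
    schurOp (fun j : ℕ => d • A.J (-(j : ℤ))) 1 A.vac = d • A.J (-1) A.vac := by
  rw [schurOp_one]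
  rfl

theorem schurOp_four_vac_add_neg (d : ℂ) :
    schurOp (fun j : ℕ => d • A.J (-(j : ℤ))) 4 A.vac
      + schurOp (fun j : ℕ => (-d) • A.J (-(j : ℤ))) 4 A.vac = vGVec A d := by
  simp only [schurOp_four, LinearMap.add_apply, LinearMap.smul_apply, Module.End.mul_apply,
    map_smul, Nat.cast_one, Nat.cast_ofNat]
  rw [A.J_comm_of_add_ne_zero (a := -1) (b := -3) (by norm_num), vGVec]
  simp only [applyOps]
  module

/-- Here `E (±m) = Ω ⊗ e^{±gJ}` and `g² = 2Nm²`. -/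
theorem modes_of_lattice_vectors_general (N m : ℕ)
    (hg : 2 ≤ Real.sqrt (2 * N) * m) (b : ℂ) (A : RankOneLatticeVOA N) :
    A.mode (A.E m) (2 * (N : ℤ) * (m : ℤ) ^ 2 - 2) (A.E (-(m : ℤ)))
        = ((Real.sqrt (2 * N) * m : ℝ) : ℂ) • A.J (-1) A.vac ∧
    A.mode (A.E (-(m : ℤ))) (2 * (N : ℤ) * (m : ℤ) ^ 2 - 2) (A.E m)
        = (-((Real.sqrt (2 * N) * m : ℝ) : ℂ)) • A.J (-1) A.vac ∧
    A.mode (A.E m + b • A.E (-(m : ℤ))) (2 * (N : ℤ) * (m : ℤ) ^ 2 - 5)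
        (A.E m + b • A.E (-(m : ℤ)))
      = b • vGVec A ((Real.sqrt (2 * N) * m : ℝ) : ℂ) := by
  have hcharge :
      ((m : ℤ) : ℂ) * (Real.sqrt (2 * N) : ℂ) = ((Real.sqrt (2 * N) * m : ℝ) : ℂ) := by
    push_cast; ring
  set g : ℂ := ((Real.sqrt (2 * N) * m : ℝ) : ℂ)
  have hcharge_neg : ((-(m : ℤ) : ℤ) : ℂ) * (Real.sqrt (2 * N) : ℂ) = -g := by
    rw [Int.cast_neg, neg_mul, hcharge]
  have hg_sq : (4 : ℤ) ≤ 2 * N * m ^ 2 := by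
    have hsqrt : Real.sqrt (2 * N) ^ 2 = 2 * N := Real.sq_sqrt (by positivity)
    have : (4 : ℝ) ≤ 2 * N * m ^ 2 := by nlinarith
    exact_mod_cast this
  have mode_pos_neg {n : ℤ} {k : ℕ} (h : n + 1 + k = 2 * N * (m : ℤ) ^ 2) :
      A.mode (A.E m) n (A.E (-(m : ℤ))) =
        schurOp (fun j : ℕ => g • A.J (-(j : ℤ))) k A.vac := by
    rw [A.mode_E_E_neg h, hcharge]
  have mode_neg_pos {n : ℤ} {k : ℕ} (h : n + 1 + k = 2 * N * (m : ℤ) ^ 2) :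
      A.mode (A.E (-(m : ℤ))) n (A.E m) =
        schurOp (fun j : ℕ => (-g) • A.J (-(j : ℤ))) k A.vac := by
    rw [← hcharge_neg, ← A.mode_E_E_neg (by rwa [neg_sq]), neg_neg]
  refine ⟨?_, ?_, ?_⟩
  · rw [mode_pos_neg (k := 1) (by ring), schurOp_one_vac]
  · rw [mode_neg_pos (k := 1) (by ring), schurOp_one_vac]
  · simp only [A.mode_add, A.mode_smul, LinearMap.add_apply, LinearMap.smul_apply, map_add,
      map_smul]
    rw [A.mode_E_E_eq_zero (m := m) (m' := m) (by linarith),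
      A.mode_E_E_eq_zero (m := -m) (m' := -m) (by linarith),
      mode_pos_neg (k := 4) (by ring), mode_neg_pos (k := 4) (by ring),
      ← schurOp_four_vac_add_neg]
    module

/-- Let `g = √(2N)·m ≥ 2` and `b ≠ 0`, and set `e^g_b = Ω ⊗ (e^{gJ} + b e^{-gJ})`.  Then
`(Ω⊗e^{±gJ})_{(g²-2)}(Ω⊗e^{∓gJ}) = ±g J₋₁Ω ⊗ 1` and `(e^g_b)_{(g²-5)} e^g_b = b v_g ⊗ 1`.
Here `Ω ⊗ e^{±gJ} = E (±m)` and `g² = 2Nm²`. -/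
theorem modes_of_lattice_vectors (N m : ℕ) (hN : 0 < N) (hm : 0 < m)
    (hg : 2 ≤ Real.sqrt (2 * N) * m) (b : ℂ) (hb : b ≠ 0) (A : RankOneLatticeVOA N) :
    A.mode (A.E m) (2 * (N : ℤ) * (m : ℤ) ^ 2 - 2) (A.E (-(m : ℤ)))
        = ((Real.sqrt (2 * N) * m : ℝ) : ℂ) • A.J (-1) A.vac ∧
    A.mode (A.E (-(m : ℤ))) (2 * (N : ℤ) * (m : ℤ) ^ 2 - 2) (A.E m)
        = (-((Real.sqrt (2 * N) * m : ℝ) : ℂ)) • A.J (-1) A.vac ∧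
    A.mode (A.E m + b • A.E (-(m : ℤ))) (2 * (N : ℤ) * (m : ℤ) ^ 2 - 5)
        (A.E m + b • A.E (-(m : ℤ)))
      = b • vGVec A ((Real.sqrt (2 * N) * m : ℝ) : ℂ) :=
  modes_of_lattice_vectors_general N m hg b A
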